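/- arXiv:2505.07103 — 4 statements merged into one kernel-verified Lean document; each statement's English description precedes it below -/
import Mathlib

section
/- Let ⟨f_i⟩_i ⊆ [K → K'] be a directed indexed family of continuous functors between c.h.p.o.'s, and define f(x) = ⋁_i f_i(x). Then f is well defined and continuous. -/
universe u v w

/-- Vertices `x, y` of an h.p.o. (the largest sub-Kan complex of a 0-∞-category, modelled
by the preorder of its vertices under the weak order `≾`) are equivalent (`x ≃ y`) if
`x ≾ y` and `y ≾ x`. -/
def HEquiv {K : Type u} [Preorder K] (x y : K) : Prop := x ≤ y ∧ y ≤ x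

/-- A sub-h.p.o. `X ⊆ K` is directed if it is nonempty and any two of its vertices admit an
upper bound in `X`. -/
def HDirected {K : Type u} [Preorder K] (X : Set K) : Prop :=
  X.Nonempty ∧ ∀ x ∈ X, ∀ y ∈ X, ∃ z ∈ X, x ≤ z ∧ y ≤ z

/-- An h.p.o. `K` is a complete homotopy partial order (c.h.p.o.) if it has a minimum element
and every directed sub-h.p.o. has a supremum (a least upper bound, unique up to `HEquiv`). -/
def IsCHPO (K : Type u) [Preorder K] : Prop :=
  (∃ b : K, ∀ x, b ≤ x) ∧ ∀ X : Set K, HDirected X → ∃ s, IsLUB X s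

/-- A functor `f : K → K'` of c.h.p.o.'s is continuous if `f(⋁X) ≃ ⋁ f(X)` for every
directed `X ⊆ K`, i.e. `f` sends any supremum of a directed set to a supremum of its image. -/
def HContinuous {K : Type u} {K' : Type v} [Preorder K] [Preorder K'] (f : K → K') : Prop :=
  ∀ X : Set K, HDirected X → ∀ s : K, IsLUB X s → IsLUB (f '' X) (f s)

/-- `[K → K']`: the h.p.o. of continuous functors from `K` to `K'`. -/
def ContHom (K : Type u) (K' : Type v) [Preorder K] [Preorder K'] : Type (max u v) :=
  {f : K → K' // HContinuous f}

/-- The pointwise order on `[K → K']`: `f ≾ g` iff `f x ≾ g x` for all `x ∈ K`. -/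
instance ContHom.instPreorder {K : Type u} {K' : Type v} [Preorder K] [Preorder K'] :
    Preorder (ContHom K K') :=
  Preorder.lift (fun f => (f.1 : K → K'))


theorem HContinuous.monotone' {K : Type u} {K' : Type v} [Preorder K] [Preorder K']
    {g : K → K'} (hg : HContinuous g) : Monotone g := by
  intro x y hxy
  have hle : ∀ a ∈ ({x, y} : Set K), a ≤ y := by
    intro a ha
    rcases Set.mem_insert_iff.mp ha with h | h
    · rw [h]; exact hxy
    · rw [Set.mem_singleton_iff.mp h]
  have hdir : HDirected ({x, y} : Set K) := by
    refine ⟨⟨x, Set.mem_insert _ _⟩, ?_⟩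
    intro a ha b hb
    exact ⟨y, Set.mem_insert_of_mem _ rfl, hle a ha, hle b hb⟩
  have hlub : IsLUB ({x, y} : Set K) y :=
    ⟨hle, fun b hb => hb (Set.mem_insert_of_mem _ rfl)⟩
  exact (hg _ hdir y hlub).1 ⟨x, Set.mem_insert _ _, rfl⟩

/-- Let `⟨f_i⟩_i ⊆ [K → K']` be a directed indexed family of continuous functors between
c.h.p.o.'s (directed in the pointwise order), and define `f x = ⋁_i f_i x`.  Then `f` is
well defined (the pointwise suprema exist) and continuous. -/
theorem pointwise_sup_continuous {K : Type u} {K' : Type v} [Preorder K] [Preorder K']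
    {I : Type w} [Nonempty I]
    (hK : IsCHPO K) (hK' : IsCHPO K')
    (F : I → K → K') (hcont : ∀ i, HContinuous (F i))
    (hdir : ∀ i j : I, ∃ l : I, (∀ x, F i x ≤ F l x) ∧ (∀ x, F j x ≤ F l x)) :
    ∃ f : K → K', (∀ x : K, IsLUB (Set.range fun i => F i x) (f x)) ∧ HContinuous f := by
  have hexists : ∀ x : K, ∃ s, IsLUB (Set.range fun i => F i x) s := by
    intro x
    apply hK'.2
    refine ⟨⟨F Classical.ofNonempty x, ⟨_, rfl⟩⟩, ?_⟩
    rintro _ ⟨i, rfl⟩ _ ⟨j, rfl⟩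
    obtain ⟨l, hil, hjl⟩ := hdir i j
    exact ⟨F l x, ⟨l, rfl⟩, hil x, hjl x⟩
  choose f hf using hexists
  refine ⟨f, hf, ?_⟩
  intro X hX s hs
  constructor
  · rintro _ ⟨x, hxX, rfl⟩
    refine (hf x).2 ?_
    rintro _ ⟨i, rfl⟩
    exact le_trans ((hcont i).monotone' (hs.1 hxX)) ((hf s).1 ⟨i, rfl⟩)
  · intro b hb
    refine (hf s).2 ?_
    rintro _ ⟨i, rfl⟩
    refine (hcont i X hX s hs).2 ?_
    rintro _ ⟨x, hxX, rfl⟩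
    exact le_trans ((hf x).1 ⟨i, rfl⟩) (hb ⟨x, hxX, rfl⟩)
end

section
/- Let K, K', K'' be c.h.p.o.'s and f ∈ [K × K' → K'']; define f̂(x) = λy ∈ K'. f(x,y). Then (1) f̂ is continuous, i.e. f̂ ∈ [K → [K' → K'']], and (2) the abstraction functor λf.f̂ : [K × K' → K''] → [K → [K' → K'']] is continuous. -/
universe u v w

section Aux

variable {A : Type*} {B : Type*} [Preorder A] [Preorder B]

theorem HContinuous.monotone'_s8 {f : A → B} (hf : HContinuous f) : Monotone f := by
  intro x y hxy
  have hle : ∀ a ∈ ({x, y} : Set A), a ≤ y := by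
    intro a ha
    simp only [Set.mem_insert_iff, Set.mem_singleton_iff] at ha
    rcases ha with rfl | rfl
    · exact hxy
    · exact le_refl _
  have hdir : HDirected ({x, y} : Set A) := by
    refine ⟨⟨x, Set.mem_insert _ _⟩, ?_⟩
    intro a ha b hb
    exact ⟨y, Set.mem_insert_of_mem _ rfl, hle a ha, hle b hb⟩
  have hlub : IsLUB ({x, y} : Set A) y :=
    ⟨fun a ha => hle a ha, fun b hb => hb (Set.mem_insert_of_mem _ rfl)⟩
  have := hf _ hdir y hlub
  exact this.1 ⟨x, by simp, rfl⟩

theorem hdirected_singleton (x : A) : HDirected ({x} : Set A) :=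
  ⟨Set.singleton_nonempty x, by
    intro a ha b hb
    rw [Set.mem_singleton_iff] at ha hb
    exact ⟨x, rfl, le_of_eq ha, le_of_eq hb⟩⟩

theorem hdirected_prod {X : Set A} {Y : Set B} (hX : HDirected X) (hY : HDirected Y) :
    HDirected (X ×ˢ Y) := by
  obtain ⟨⟨x₀, hx₀⟩, hXd⟩ := hX
  obtain ⟨⟨y₀, hy₀⟩, hYd⟩ := hY
  refine ⟨⟨(x₀, y₀), hx₀, hy₀⟩, ?_⟩
  rintro ⟨a₁, b₁⟩ ⟨ha₁, hb₁⟩ ⟨a₂, b₂⟩ ⟨ha₂, hb₂⟩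
  obtain ⟨za, hza, h1, h2⟩ := hXd a₁ ha₁ a₂ ha₂
  obtain ⟨zb, hzb, h3, h4⟩ := hYd b₁ hb₁ b₂ hb₂
  exact ⟨(za, zb), ⟨hza, hzb⟩, ⟨h1, h3⟩, ⟨h2, h4⟩⟩

theorem isLUB_prod' {X : Set A} {Y : Set B} (hX : X.Nonempty) (hY : Y.Nonempty)
    {sa : A} {sb : B} (ha : IsLUB X sa) (hb : IsLUB Y sb) :
    IsLUB (X ×ˢ Y) (sa, sb) := by
  constructor
  · rintro ⟨a, b⟩ ⟨haX, hbY⟩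
    exact ⟨ha.1 haX, hb.1 hbY⟩
  · rintro ⟨c, d⟩ hc
    obtain ⟨x₀, hx₀⟩ := hX
    obtain ⟨y₀, hy₀⟩ := hY
    constructor
    · refine ha.2 fun a haX => ?_
      exact (hc (⟨haX, hy₀⟩ : (a, y₀) ∈ X ×ˢ Y)).1
    · refine hb.2 fun b hbY => ?_
      exact (hc (⟨hx₀, hbY⟩ : (x₀, b) ∈ X ×ˢ Y)).2

/-- An `IsLUB` in the function order on `ContHom` of a directed family is a pointwise lub,
provided the codomain is a c.h.p.o. -/
theorem isLUB_pointwise (hB : IsCHPO B) {F : Set (ContHom A B)} (hF : HDirected F)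
    {s : ContHom A B} (hs : IsLUB F s) (a : A) :
    IsLUB ((fun f : ContHom A B => f.1 a) '' F) (s.1 a) := by
  -- pointwise sets are directed
  have hSdir : ∀ c : A, HDirected ((fun f : ContHom A B => f.1 c) '' F) := by
    intro c
    obtain ⟨⟨f₀, hf₀⟩, hFd⟩ := hF
    refine ⟨⟨f₀.1 c, ⟨f₀, hf₀, rfl⟩⟩, ?_⟩
    rintro x ⟨f, hf, rfl⟩ y ⟨g, hg, rfl⟩
    obtain ⟨h, hh, h1, h2⟩ := hFd f hf g hg
    exact ⟨h.1 c, ⟨h, hh, rfl⟩, h1 c, h2 c⟩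
  -- the pointwise supremum
  choose t ht using fun c : A => hB.2 _ (hSdir c)
  -- t is monotone/continuous
  have htmono : ∀ f ∈ F, ∀ c : A, f.1 c ≤ t c := fun f hf c => (ht c).1 ⟨f, hf, rfl⟩
  have htcont : HContinuous t := by
    intro X hX σ hσ
    constructor
    · rintro b ⟨x, hx, rfl⟩
      refine (ht x).2 ?_
      rintro b ⟨f, hf, rfl⟩
      exact le_trans ((f.2).monotone'_s8 (hσ.1 hx)) (htmono f hf σ)
    · intro b hb
      refine (ht σ).2 ?_
      rintro c ⟨f, hf, rfl⟩
      refine (f.2 X hX σ hσ).2 ?_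
      rintro d ⟨x, hx, rfl⟩
      exact le_trans (htmono f hf x) (hb ⟨x, hx, rfl⟩)
  -- t as a ContHom is an upper bound of F, hence s ≤ t pointwise
  have hst : ∀ c : A, s.1 c ≤ t c := by
    have : s ≤ (⟨t, htcont⟩ : ContHom A B) := hs.2 fun f hf => fun c => htmono f hf c
    exact this
  constructor
  · rintro b ⟨f, hf, rfl⟩
    exact (hs.1 hf) a
  · intro b hb
    exact le_trans (hst a) ((ht a).2 hb)

end Aux

/-- Continuity of abstraction: let `K`, `K'`, `K''` be c.h.p.o.'s and, for
`f ∈ [K × K' → K'']`, let `f̂ x = λ y ∈ K'. f (x, y)`.  Then (1) `f̂` is continuous, i.e.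
`f̂ ∈ [K → [K' → K'']]` (each `f̂ x` is continuous and `f̂` itself is continuous), and
(2) the abstraction functor `λ f. f̂ : [K × K' → K''] → [K → [K' → K'']]` is continuous. -/
theorem abstraction_continuous {K : Type u} {K' : Type v} {K'' : Type w}
    [Preorder K] [Preorder K'] [Preorder K'']
    (hK : IsCHPO K) (hK' : IsCHPO K') (hK'' : IsCHPO K'') :
    ∃ curry : ContHom (K × K') K'' → ContHom K (ContHom K' K''),
      (∀ (f : ContHom (K × K') K'') (x : K) (y : K'), ((curry f).1 x).1 y = f.1 (x, y)) ∧
      (∀ f : ContHom (K × K') K'', HContinuous fun x : K => (curry f).1 x) ∧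
      HContinuous curry := by
  classical
  -- each section `f̂ x` is continuous
  have sectcont : ∀ (f : ContHom (K × K') K'') (x : K),
      HContinuous (fun y : K' => f.1 (x, y)) := by
    intro f x Y hY s' hs'
    have hdir : HDirected (({x} : Set K) ×ˢ Y) := hdirected_prod (hdirected_singleton x) hY
    have hlub : IsLUB (({x} : Set K) ×ˢ Y) (x, s') :=
      isLUB_prod' (Set.singleton_nonempty x) hY.1 (isLUB_singleton (a := x)) hs'
    have h := f.2 _ hdir _ hlub
    have himg : f.1 '' (({x} : Set K) ×ˢ Y) = (fun y : K' => f.1 (x, y)) '' Y := by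
      ext b; constructor
      · rintro ⟨⟨a, y⟩, ⟨rfl, hy⟩, rfl⟩
        exact ⟨y, hy, rfl⟩
      · rintro ⟨y, hy, rfl⟩; exact ⟨(x, y), ⟨rfl, hy⟩, rfl⟩
    rwa [himg] at h
  -- the underlying curried map
  set ch : ContHom (K × K') K'' → K → ContHom K' K'' :=
    fun f x => ⟨fun y => f.1 (x, y), sectcont f x⟩ with hch
  -- `f̂` is continuous
  have chcont : ∀ f : ContHom (K × K') K'', HContinuous (ch f) := by
    intro f X hX s hs
    constructor
    · rintro g ⟨x, hx, rfl⟩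
      intro y
      exact (f.2).monotone'_s8 (Prod.mk_le_mk.mpr ⟨hs.1 hx, le_refl y⟩)
    · intro g hg y
      have hdir : HDirected (X ×ˢ ({y} : Set K')) := hdirected_prod hX (hdirected_singleton y)
      have hlub : IsLUB (X ×ˢ ({y} : Set K')) (s, y) :=
        isLUB_prod' hX.1 (Set.singleton_nonempty y) hs (isLUB_singleton (a := y))
      refine (f.2 _ hdir _ hlub).2 ?_
      rintro b ⟨⟨x, y'⟩, ⟨hx, rfl⟩, rfl⟩
      exact hg ⟨x, hx, rfl⟩ y'
  refine ⟨fun f => ⟨ch f, chcont f⟩, fun f x y => rfl, fun f => chcont f, ?_⟩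
  -- continuity of abstraction itself
  intro F hF s hs
  constructor
  · rintro g ⟨f, hf, rfl⟩
    intro x y
    exact (hs.1 hf) (x, y)
  · intro g hg x y
    refine (isLUB_pointwise hK'' hF hs (x, y)).2 ?_
    rintro b ⟨f, hf, rfl⟩
    exact hg ⟨f, hf, rfl⟩ x y
end

section
/- The ∞-category CHPO is a 0-∞-category: (1) every mapping Kan complex CHPO(K,K') = [K → K'] is a c.h.p.o. whose minimum element is the constant functor λx.0'; (2) composition of morphisms is continuous with respect to the homotopy order (g ∘ (⋁F) ≃ ⋁(g ∘ F) and (⋁F') ∘ f ≃ ⋁(F' ∘ f) for directed families F, F' of continuous functors); and (3) 0_{K',K''} ∘ f ≃ 0_{K,K''} for every f ∈ CHPO(K,K'). -/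
universe u v w

section Aux

variable {K : Type u} {K' : Type v} [Preorder K] [Preorder K']

theorem HContinuous.mono {f : K → K'} (hf : HContinuous f) : Monotone f := by
  intro x y hxy
  have hd : HDirected ({x, y} : Set K) := by
    refine ⟨⟨x, Or.inl rfl⟩, ?_⟩
    intro a ha b hb
    have hay : a ≤ y := by rcases ha with h | h <;> subst h; exact hxy; exact le_refl _
    have hby : b ≤ y := by rcases hb with h | h <;> subst h; exact hxy; exact le_refl _
    exact ⟨y, Or.inr rfl, hay, hby⟩
  have hlub : IsLUB ({x, y} : Set K) y := by
    constructor
    · intro a ha; rcases ha with h | h <;> subst h; exact hxy; exact le_refl _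
    · intro u hu; exact hu (Or.inr rfl)
  have := hf _ hd y hlub
  exact this.1 ⟨x, Or.inl rfl, rfl⟩

/-- evaluation image -/
def evalSet (F : Set (ContHom K K')) (x : K) : Set K' := (fun f : ContHom K K' => f.1 x) '' F

theorem evalSet_directed {F : Set (ContHom K K')} (hF : HDirected F) (x : K) :
    HDirected (evalSet F x) := by
  obtain ⟨⟨f0, hf0⟩, hub⟩ := hF
  refine ⟨⟨f0.1 x, f0, hf0, rfl⟩, ?_⟩
  rintro _ ⟨f, hf, rfl⟩ _ ⟨g, hg, rfl⟩
  obtain ⟨h, hh, hfh, hgh⟩ := hub f hf g hg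
  exact ⟨h.1 x, ⟨h, hh, rfl⟩, hfh x, hgh x⟩

/-- pointwise sup of a directed family of continuous maps, when `K'` is a CHPO -/
theorem pointwiseSup (hK' : IsCHPO K') (F : Set (ContHom K K')) (hF : HDirected F) :
    ∃ s : ContHom K K', (∀ x, IsLUB (evalSet F x) (s.1 x)) ∧ IsLUB F s := by
  have hex : ∀ x : K, ∃ c : K', IsLUB (evalSet F x) c :=
    fun x => hK'.2 _ (evalSet_directed hF x)
  choose sf hsf using hex
  have hmono : Monotone sf := by
    intro x y hxy
    apply (hsf x).2
    rintro _ ⟨f, hf, rfl⟩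
    exact le_trans (f.2.mono hxy) ((hsf y).1 ⟨f, hf, rfl⟩)
  have hcont : HContinuous sf := by
    intro X hX t ht
    constructor
    · rintro _ ⟨x, hx, rfl⟩
      exact hmono (ht.1 hx)
    · intro u hu
      apply (hsf t).2
      rintro _ ⟨f, hf, rfl⟩
      have hft : IsLUB (f.1 '' X) (f.1 t) := f.2 X hX t ht
      apply hft.2
      rintro _ ⟨x, hx, rfl⟩
      exact le_trans ((hsf x).1 ⟨f, hf, rfl⟩) (hu ⟨x, hx, rfl⟩)
  refine ⟨⟨sf, hcont⟩, hsf, ?_, ?_⟩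
  · intro f hf x
    exact (hsf x).1 ⟨f, hf, rfl⟩
  · intro g hg x
    apply (hsf x).2
    rintro _ ⟨f, hf, rfl⟩
    exact hg hf x

/-- any LUB in `ContHom` is a pointwise LUB -/
theorem lub_pointwise (hK' : IsCHPO K') {F : Set (ContHom K K')} (hF : HDirected F)
    {s : ContHom K K'} (hs : IsLUB F s) (x : K) : IsLUB (evalSet F x) (s.1 x) := by
  obtain ⟨s0, hs0pt, hs0⟩ := pointwiseSup hK' F hF
  have h1 : s ≤ s0 := hs.2 hs0.1
  have h2 : s0 ≤ s := hs0.2 hs.1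
  constructor
  · rintro _ ⟨f, hf, rfl⟩; exact hs.1 hf x
  · intro u hu
    exact le_trans (h1 x) ((hs0pt x).2 hu)

end Aux

/-- The ∞-category `CHPO` is a 0-∞-category (an ∞-category enriched in h.p.o.'s such that):
(1) every mapping Kan complex `CHPO(K,K') = [K → K']` is a c.h.p.o. whose minimum element
is the constant functor `λ x. 0'`; (2) composition is continuous with respect to the
homotopy order: `g ∘ (⋁F) ≃ ⋁(g ∘ F)` and `(⋁F') ∘ f ≃ ⋁(F' ∘ f)` for directed families
`F ⊆ [K → K']`, `F' ⊆ [K' → K'']` of continuous functors (suprema taken pointwise, i.e.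
as least upper bounds in the pointwise order); and (3) `0_{K',K''} ∘ f ≃ 0_{K,K''}` for
every `f ∈ CHPO(K,K')`. -/
theorem CHPO_is_zero_infinity_category :
    -- (1) `[K → K']` is a c.h.p.o. with minimum the constant functor at the bottom of `K'`
    (∀ (K K' : Type u) [Preorder K] [Preorder K'], IsCHPO K → IsCHPO K' →
      IsCHPO (ContHom K K') ∧
        ∃ z : ContHom K K',
          (∃ b : K', (∀ y, b ≤ y) ∧ z.1 = fun _ => b) ∧ ∀ f : ContHom K K', z ≤ f) ∧
    -- (2) composition is continuous in each variable with respect to the homotopy order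
    (∀ (K K' K'' : Type u) [Preorder K] [Preorder K'] [Preorder K''],
      IsCHPO K → IsCHPO K' → IsCHPO K'' →
        (∀ (g : ContHom K' K'') (F : Set (ContHom K K')), HDirected F →
          ∀ s : ContHom K K', IsLUB F s →
            IsLUB ((fun f : ContHom K K' => (g.1 ∘ f.1 : K → K'')) '' F) (g.1 ∘ s.1)) ∧
        (∀ (f : ContHom K K') (G : Set (ContHom K' K'')), HDirected G →
          ∀ t : ContHom K' K'', IsLUB G t →
            IsLUB ((fun g : ContHom K' K'' => (g.1 ∘ f.1 : K → K'')) '' G) (t.1 ∘ f.1))) ∧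
    -- (3) composition with the zero morphism gives the zero morphism, up to equivalence
    (∀ (K K' K'' : Type u) [Preorder K] [Preorder K'] [Preorder K''],
      IsCHPO K → IsCHPO K' → IsCHPO K'' →
        ∀ (f : ContHom K K') (b'' : K''), (∀ y, b'' ≤ y) →
          ∀ x : K, HEquiv ((fun _ : K' => b'') (f.1 x)) b'') := by
  refine ⟨?_, ?_, ?_⟩
  · intro K K' _ _ hK hK'
    obtain ⟨b', hb'⟩ := hK'.1
    have hconst : HContinuous (fun _ : K => b') := by
      intro X hX t ht
      constructor
      · rintro _ ⟨x, hx, rfl⟩; exact le_refl _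
      · intro u hu
        obtain ⟨x0, hx0⟩ := hX.1
        exact hu ⟨x0, hx0, rfl⟩
    refine ⟨⟨⟨⟨fun _ => b', hconst⟩, fun f x => hb' _⟩, ?_⟩,
      ⟨⟨fun _ => b', hconst⟩, ⟨b', hb', rfl⟩, fun f x => hb' _⟩⟩
    intro F hF
    obtain ⟨s, _, hs⟩ := pointwiseSup hK' F hF
    exact ⟨s, hs⟩
  · intro K K' K'' _ _ _ hK hK' hK''
    constructor
    · intro g F hF s hs
      constructor
      · rintro _ ⟨f, hf, rfl⟩
        intro x
        exact g.2.mono (hs.1 hf x)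
      · intro u hu x
        have hg : IsLUB (g.1 '' evalSet F x) (g.1 (s.1 x)) :=
          g.2 _ (evalSet_directed hF x) _ (lub_pointwise hK' hF hs x)
        apply hg.2
        rintro _ ⟨_, ⟨f, hf, rfl⟩, rfl⟩
        exact hu ⟨f, hf, rfl⟩ x
    · intro f G hG t ht
      constructor
      · rintro _ ⟨g, hg, rfl⟩
        intro x
        exact ht.1 hg (f.1 x)
      · intro u hu x
        apply (lub_pointwise hK'' hG ht (f.1 x)).2
        rintro _ ⟨g, hg, rfl⟩
        exact hu ⟨g, hg, rfl⟩ x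
  · intro K K' K'' _ _ _ _ _ _ f b'' hb'' x
    exact ⟨le_refl _, le_refl _⟩
end

section
/- If K₀ is a Homotopy Scott Domain, then K_{n+1} = [K_n → K_n] is a Homotopy Scott Domain for each n ≥ 0: the compact elements of K_{n+1} are finite suprema ⋁_{i=1}^k (a_i ⇒ b_i) of step functors with a_i, b_i compact in K_n, every continuous f ∈ K_{n+1} satisfies f ≃ ⋁(f↓) with (f↓) directed, and every h.p.o. of continuous functors with an upper bound has a (pointwise) supremum. -/
universe u v w

/-- An element `x` of a c.h.p.o. `K` is compact if whenever `x ≾ ⋁X` for a directed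
`X ⊆ K` (with `⋁X` any supremum of `X`), there is `x₀ ∈ X` with `x ≾ x₀`. -/
def HCompact {K : Type u} [Preorder K] (x : K) : Prop :=
  ∀ X : Set K, HDirected X → ∀ s : K, IsLUB X s → x ≤ s → ∃ x₀ ∈ X, x ≤ x₀

/-- `x↓ = ⟨y ≾ x | y compact⟩`: the sub-h.p.o. of compact elements below `x`. -/
def compactsBelow {K : Type u} [Preorder K] (x : K) : Set K :=
  {y | y ≤ x ∧ HCompact y}

/-- A c.h.p.o. `K` is algebraic if for every `x ∈ K` the h.p.o. `x↓` of compact elements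
below `x` is directed and `x ≃ ⋁(x↓)` (i.e. `x` is a least upper bound of `x↓`). -/
def HAlgebraic (K : Type u) [Preorder K] : Prop :=
  ∀ x : K, HDirected (compactsBelow x) ∧ IsLUB (compactsBelow x) x

/-- A c.h.p.o. `K` is bounded complete if every sub-h.p.o. `X ⊆ K` with an upper bound
has a supremum. -/
def HBoundedComplete (K : Type u) [Preorder K] : Prop :=
  ∀ X : Set K, (∃ u : K, ∀ x ∈ X, x ≤ u) → ∃ s : K, IsLUB X s

/-- A Homotopy Scott Domain is a bounded complete algebraic c.h.p.o. -/
def HScottDomain (K : Type u) [Preorder K] : Prop :=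
  IsCHPO K ∧ HAlgebraic K ∧ HBoundedComplete K

/-- Constant functors between h.p.o.'s are continuous. -/
theorem hContinuous_const {K : Type u} {K' : Type v} [Preorder K] [Preorder K'] (c : K') :
    HContinuous (fun _ : K => c) := by
  intro X hX s _
  constructor
  · rintro y ⟨x, -, rfl⟩
    exact le_rfl
  · intro u hu
    obtain ⟨x, hx⟩ := hX.1
    exact hu ⟨x, hx, rfl⟩

/-- The tower `K₀, K₁ = [K₀ → K₀], K₂ = [K₁ → K₁], …` of c.h.p.o.'s, defined by
`K_{n+1} = [K_n → K_n]`, together with its (pointwise) orders. -/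
def Tower (K₀ : Type u) (i₀ : Preorder K₀) : ℕ → Σ' (T : Type u), Preorder T
  | 0 => ⟨K₀, i₀⟩
  | n + 1 =>
    ⟨@ContHom (Tower K₀ i₀ n).1 (Tower K₀ i₀ n).1 (Tower K₀ i₀ n).2 (Tower K₀ i₀ n).2,
      @ContHom.instPreorder _ _ (Tower K₀ i₀ n).2 (Tower K₀ i₀ n).2⟩

instance TowerPreorder (K₀ : Type u) (i₀ : Preorder K₀) (n : ℕ) :
    Preorder (Tower K₀ i₀ n).1 :=
  (Tower K₀ i₀ n).2

/-- The minimum elements `⊥_n` of the levels of the tower: `⊥_{n+1} = λ x. ⊥_n`. -/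
def towerBot (K₀ : Type u) (i₀ : Preorder K₀) (b₀ : K₀) : ∀ n, (Tower K₀ i₀ n).1
  | 0 => b₀
  | n + 1 => ⟨fun _ => towerBot K₀ i₀ b₀ n, hContinuous_const _⟩

open scoped Classical in
/-- The step functor `(a ⇒ b) : K → K`: it sends `x` to `b` if `x ≿ a` and to the minimum
element `0` otherwise (acting degenerately on higher simplices). -/
noncomputable def stepFun {K : Type u} [Preorder K] (bot a b : K) : K → K :=
  fun x => if a ≤ x then b else bot

namespace HSDAux

variable {K : Type u} [Preorder K]

theorem ContHom.le_def {f g : ContHom K K} : f ≤ g ↔ ∀ x, f.1 x ≤ g.1 x := Iff.rfl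

theorem isLUB_of_equiv {X : Set K} {s s' : K} (h : IsLUB X s) (h1 : s ≤ s') (h2 : s' ≤ s) :
    IsLUB X s' :=
  ⟨fun _ hy => (h.1 hy).trans h1, fun _ hv => h2.trans (h.2 hv)⟩

theorem hcont_mono {f : K → K} (hf : HContinuous f) : Monotone f := by
  intro x y hxy
  have hmem : ∀ p ∈ ({x, y} : Set K), p ≤ y := by
    rintro p (rfl | rfl)
    · exact hxy
    · exact le_rfl
  have hd : HDirected ({x, y} : Set K) := by
    refine ⟨⟨x, Or.inl rfl⟩, ?_⟩
    intro p hp q hq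
    exact ⟨y, Or.inr rfl, hmem p hp, hmem q hq⟩
  have hlub : IsLUB ({x, y} : Set K) y :=
    ⟨fun p hp => hmem p hp, fun v hv => hv (Or.inr rfl)⟩
  exact (hf _ hd y hlub).1 ⟨x, Or.inl rfl, rfl⟩

theorem stepFun_pos {bot a b x : K} (h : a ≤ x) : stepFun bot a b x = b := by
  unfold stepFun; rw [if_pos h]

theorem stepFun_neg {bot a b x : K} (h : ¬ a ≤ x) : stepFun bot a b x = bot := by
  unfold stepFun; rw [if_neg h]

theorem hdirected_eval {F : Set (ContHom K K)} (hF : HDirected F) (x : K) :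
    HDirected ((fun f : ContHom K K => f.1 x) '' F) := by
  obtain ⟨f₀, hf₀⟩ := hF.1
  refine ⟨⟨f₀.1 x, f₀, hf₀, rfl⟩, ?_⟩
  rintro p ⟨f, hf, rfl⟩ q ⟨f', hf', rfl⟩
  obtain ⟨h, hh, h1, h2⟩ := hF.2 f hf f' hf'
  exact ⟨h.1 x, ⟨h, hh, rfl⟩, h1 x, h2 x⟩

theorem pointwiseSup_continuous {F : Set (ContHom K K)} {g : K → K}
    (hg : ∀ x, IsLUB ((fun f : ContHom K K => f.1 x) '' F) (g x)) : HContinuous g := by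
  have hmono : Monotone g := by
    intro x y hxy
    refine (hg x).2 ?_
    rintro p ⟨f, hf, rfl⟩
    exact ((hcont_mono f.2) hxy).trans ((hg y).1 ⟨f, hf, rfl⟩)
  intro X hX s hs
  constructor
  · rintro p ⟨x, hx, rfl⟩
    exact hmono (hs.1 hx)
  · intro v hv
    refine (hg s).2 ?_
    rintro p ⟨f, hf, rfl⟩
    refine (f.2 X hX s hs).2 ?_
    rintro q ⟨x, hx, rfl⟩
    exact ((hg x).1 ⟨f, hf, rfl⟩).trans (hv ⟨x, hx, rfl⟩)

theorem pointwiseSup_isLUB {F : Set (ContHom K K)} {g : ContHom K K}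
    (hg : ∀ x, IsLUB ((fun f : ContHom K K => f.1 x) '' F) (g.1 x)) : IsLUB F g := by
  constructor
  · intro f hf x
    exact (hg x).1 ⟨f, hf, rfl⟩
  · intro v hv x
    refine (hg x).2 ?_
    rintro p ⟨f, hf, rfl⟩
    exact hv hf x

theorem exists_pointwise_lub {F : Set (ContHom K K)}
    (h : ∀ x, ∃ s, IsLUB ((fun f : ContHom K K => f.1 x) '' F) s) :
    ∃ g : ContHom K K, (∀ x, IsLUB ((fun f : ContHom K K => f.1 x) '' F) (g.1 x)) ∧
      IsLUB F g := by
  choose t ht using h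
  exact ⟨⟨t, pointwiseSup_continuous ht⟩, ht, pointwiseSup_isLUB ht⟩

theorem isLUB_pointwise {F : Set (ContHom K K)} {G : ContHom K K}
    (h : ∀ x, ∃ s, IsLUB ((fun f : ContHom K K => f.1 x) '' F) s) (hG : IsLUB F G) :
    ∀ x, IsLUB ((fun f : ContHom K K => f.1 x) '' F) (G.1 x) := by
  obtain ⟨g, hg, hglub⟩ := exists_pointwise_lub h
  intro x
  exact isLUB_of_equiv (hg x) (hglub.2 hG.1 x) (hG.2 hglub.1 x)

variable {bot : K}

theorem stepFun_cont (hbot : ∀ x, bot ≤ x) {a : K} (ha : HCompact a) (b : K) :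
    HContinuous (stepFun bot a b) := by
  intro X hX s hs
  by_cases hle : a ≤ s
  · obtain ⟨x₀, hx₀, hax₀⟩ := ha X hX s hs hle
    constructor
    · rintro p ⟨x, hx, rfl⟩
      rw [stepFun_pos hle]
      by_cases hax : a ≤ x
      · rw [stepFun_pos hax]
      · rw [stepFun_neg hax]; exact hbot b
    · intro v hv
      have := hv ⟨x₀, hx₀, rfl⟩
      rwa [stepFun_pos hax₀, ← stepFun_pos (bot := bot) (b := b) hle] at this
  · constructor
    · rintro p ⟨x, hx, rfl⟩
      rw [stepFun_neg hle, stepFun_neg (fun h : a ≤ x => hle (h.trans (hs.1 hx)))]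
    · intro v hv
      obtain ⟨x, hx⟩ := hX.1
      have := hv ⟨x, hx, rfl⟩
      rwa [stepFun_neg (fun h : a ≤ x => hle (h.trans (hs.1 hx))),
        ← stepFun_neg (bot := bot) (a := a) (b := b) (x := s) hle] at this

theorem stepFun_le (hbot : ∀ x, bot ≤ x) {a b : K} {g : ContHom K K} (h : b ≤ g.1 a) (x : K) :
    stepFun bot a b x ≤ g.1 x := by
  by_cases hax : a ≤ x
  · rw [stepFun_pos hax]; exact h.trans (hcont_mono g.2 hax)
  · rw [stepFun_neg hax]; exact hbot _

theorem hdirected_finite_ub {F : Set K} (hF : HDirected F) :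
    ∀ (k : ℕ) (f : Fin k → K), (∀ i, f i ∈ F) → ∃ u ∈ F, ∀ i, f i ≤ u := by
  intro k
  induction k with
  | zero => intro f _; obtain ⟨u, hu⟩ := hF.1; exact ⟨u, hu, fun i => i.elim0⟩
  | succ m ih =>
    intro f hf
    obtain ⟨u, hu, hle⟩ := ih (fun i => f i.castSucc) (fun i => hf _)
    obtain ⟨w, hw, hw1, hw2⟩ := hF.2 u hu (f (Fin.last m)) (hf _)
    refine ⟨w, hw, fun i => ?_⟩
    refine Fin.lastCases ?_ (fun j => ?_) i
    · exact hw2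
    · exact (hle j).trans hw1

/-- Any continuous functor that is a pointwise sup of finitely many step functors with
compact data is a compact element of `[K → K]`. -/
theorem compact_of_steps (hbot : ∀ x, bot ≤ x) (hsup : ∀ X : Set K, HDirected X → ∃ s, IsLUB X s)
    (g : ContHom K K) (k : ℕ) (a b : Fin k → K)
    (hab : ∀ i, HCompact (a i) ∧ HCompact (b i))
    (hg : ∀ x, IsLUB (Set.range fun i => stepFun bot (a i) (b i) x) (g.1 x)) :
    HCompact g := by
  intro F hF s hs hgs
  have hpt : ∀ x, IsLUB ((fun f : ContHom K K => f.1 x) '' F) (s.1 x) :=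
    isLUB_pointwise (fun x => hsup _ (hdirected_eval hF x)) hs
  -- for each i find f_i ∈ F dominating the i-th step functor
  have hstep : ∀ i : Fin k, ∃ f ∈ F, ∀ x, stepFun bot (a i) (b i) x ≤ f.1 x := by
    intro i
    have hba : b i ≤ s.1 (a i) := by
      have h1 : stepFun bot (a i) (b i) (a i) ≤ g.1 (a i) := (hg (a i)).1 ⟨i, rfl⟩
      rw [stepFun_pos le_rfl] at h1
      exact h1.trans (hgs (a i))
    obtain ⟨p, ⟨f, hfF, rfl⟩, hbf⟩ :=
      (hab i).2 _ (hdirected_eval hF (a i)) _ (hpt (a i)) hba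
    refine ⟨f, hfF, fun x => ?_⟩
    by_cases hax : a i ≤ x
    · rw [stepFun_pos hax]; exact hbf.trans (hcont_mono f.2 hax)
    · rw [stepFun_neg hax]; exact hbot _
  choose ff hffF hffle using hstep
  obtain ⟨u, huF, hu⟩ := hdirected_finite_ub hF k ff hffF
  refine ⟨u, huF, fun x => ?_⟩
  refine (hg x).2 ?_
  rintro p ⟨i, rfl⟩
  exact (hffle i x).trans (hu i x)

variable (bot) in
/-- The set of finite pointwise suprema of step functors below a given continuous `g`. -/
def Dset (g : ContHom K K) : Set (ContHom K K) :=
  {h | ∃ (k : ℕ) (a b : Fin k → K),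
    (∀ i, HCompact (a i) ∧ HCompact (b i) ∧ b i ≤ g.1 (a i)) ∧
    ∀ x, IsLUB (Set.range fun i => stepFun bot (a i) (b i) x) (h.1 x)}

theorem Dset_le (hbot : ∀ x, bot ≤ x) {g h : ContHom K K} (hh : h ∈ Dset bot g) : h ≤ g := by
  obtain ⟨k, a, b, hab, hlub⟩ := hh
  intro x
  refine (hlub x).2 ?_
  rintro p ⟨i, rfl⟩
  exact stepFun_le hbot (hab i).2.2 x

theorem Dset_compact (hbot : ∀ x, bot ≤ x) (hsup : ∀ X : Set K, HDirected X → ∃ s, IsLUB X s)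
    {g h : ContHom K K} (hh : h ∈ Dset bot g) : HCompact h := by
  obtain ⟨k, a, b, hab, hlub⟩ := hh
  exact compact_of_steps hbot hsup h k a b (fun i => ⟨(hab i).1, (hab i).2.1⟩) hlub

theorem Dset_directed (hbot : ∀ x, bot ≤ x) (hK : HScottDomain K) (g : ContHom K K) :
    HDirected (Dset bot g) := by
  constructor
  · refine ⟨⟨fun _ => bot, hContinuous_const bot⟩, 0, Fin.elim0, Fin.elim0,
      fun i => i.elim0, fun x => ?_⟩
    have : (Set.range fun i : Fin 0 => stepFun bot (Fin.elim0 i) (Fin.elim0 i) x) = ∅ :=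
      Set.range_eq_empty _
    rw [this]
    exact ⟨fun p hp => hp.elim, fun v _ => hbot v⟩
  · rintro h₁ ⟨k₁, a₁, b₁, hab₁, hlub₁⟩ h₂ ⟨k₂, a₂, b₂, hab₂, hlub₂⟩
    set a : Fin (k₁ + k₂) → K := Fin.addCases a₁ a₂ with ha
    set b : Fin (k₁ + k₂) → K := Fin.addCases b₁ b₂ with hb
    have hab : ∀ i, HCompact (a i) ∧ HCompact (b i) ∧ b i ≤ g.1 (a i) := by
      intro i
      refine Fin.addCases (fun j => ?_) (fun j => ?_) i <;>
        simp only [ha, hb, Fin.addCases_left, Fin.addCases_right]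
      · exact hab₁ j
      · exact hab₂ j
    -- build the pointwise sup of all the step functors
    set E : Fin (k₁ + k₂) → ContHom K K :=
      fun i => ⟨stepFun bot (a i) (b i), stepFun_cont hbot (hab i).1 _⟩ with hE
    have hrange : ∀ x, ((fun f : ContHom K K => f.1 x) '' Set.range E) =
        Set.range fun i => stepFun bot (a i) (b i) x := by
      intro x
      rw [← Set.range_comp]
      rfl
    have hbdd : ∀ x, ∃ s, IsLUB ((fun f : ContHom K K => f.1 x) '' Set.range E) s := by
      intro x
      refine hK.2.2 _ ⟨g.1 x, ?_⟩
      rintro p hp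
      rw [hrange x] at hp
      obtain ⟨i, rfl⟩ := hp
      exact stepFun_le hbot (hab i).2.2 x
    obtain ⟨t, ht, -⟩ := exists_pointwise_lub hbdd
    have htlub : ∀ x, IsLUB (Set.range fun i => stepFun bot (a i) (b i) x) (t.1 x) := by
      intro x; rw [← hrange x]; exact ht x
    refine ⟨t, ⟨k₁ + k₂, a, b, hab, htlub⟩, ?_, ?_⟩
    · intro x
      refine (hlub₁ x).2 ?_
      rintro p ⟨j, rfl⟩
      have h1 := (htlub x).1 ⟨Fin.castAdd k₂ j, rfl⟩
      simpa only [ha, hb, Fin.addCases_left] using h1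
    · intro x
      refine (hlub₂ x).2 ?_
      rintro p ⟨j, rfl⟩
      have h1 := (htlub x).1 ⟨Fin.natAdd k₁ j, rfl⟩
      simpa only [ha, hb, Fin.addCases_right] using h1

theorem hdirected_image_mono {X : Set K} (hX : HDirected X) {f : K → K} (hf : Monotone f) :
    HDirected (f '' X) := by
  obtain ⟨x, hx⟩ := hX.1
  refine ⟨⟨f x, x, hx, rfl⟩, ?_⟩
  rintro p ⟨y, hy, rfl⟩ q ⟨z, hz, rfl⟩
  obtain ⟨w, hw, h1, h2⟩ := hX.2 y hy z hz
  exact ⟨f w, ⟨w, hw, rfl⟩, hf h1, hf h2⟩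

theorem Dset_isLUB (hbot : ∀ x, bot ≤ x) (hK : HScottDomain K) (g : ContHom K K) :
    IsLUB (Dset bot g) g := by
  constructor
  · intro h hh; exact Dset_le hbot hh
  · intro v hv x
    -- g.1 x is the sup of its compact approximants
    refine (hK.2.1 (g.1 x)).2.2 ?_
    rintro b' ⟨hb'le, hb'cpt⟩
    -- find a compact a ≤ x with b' ≤ g a
    have hxd := (hK.2.1 x).1
    have hxlub := (hK.2.1 x).2
    have himg := g.2 _ hxd x hxlub
    obtain ⟨p, ⟨aa, ⟨hax, hacpt⟩, rfl⟩, hba⟩ :=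
      hb'cpt _ (hdirected_image_mono hxd (hcont_mono g.2)) _ himg hb'le
    -- the single step functor (aa ⇒ b') lies in Dset
    have hstep : (⟨stepFun bot aa b', stepFun_cont hbot hacpt b'⟩ : ContHom K K) ∈
        Dset bot g := by
      refine ⟨1, fun _ => aa, fun _ => b', fun _ => ⟨hacpt, hb'cpt, hba⟩, fun y => ?_⟩
      have : (Set.range fun _ : Fin 1 => stepFun bot aa b' y) = {stepFun bot aa b' y} :=
        Set.range_const
      rw [this]
      exact isLUB_singleton
    have h2 : stepFun bot aa b' x ≤ v.1 x := hv hstep x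
    rwa [stepFun_pos hax] at h2

/-- The master theorem: if `K` is a Homotopy Scott Domain with minimum `bot`, then
`[K → K]` is a Homotopy Scott Domain with the expected compacts and pointwise bounded sups. -/
theorem master (hbot : ∀ x, bot ≤ x) (hK : HScottDomain K) :
    HScottDomain (ContHom K K) ∧
    (∀ g : ContHom K K,
      HCompact g ↔
        ∃ (k : ℕ) (a b : Fin k → K),
          (∀ i, HCompact (a i) ∧ HCompact (b i)) ∧
          ∀ x, IsLUB (Set.range fun i => stepFun bot (a i) (b i) x) (g.1 x)) ∧
    (∀ F : Set (ContHom K K), (∃ u, ∀ f ∈ F, f ≤ u) →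
      ∃ g : ContHom K K,
        (∀ x, IsLUB ((fun f : ContHom K K => f.1 x) '' F) (g.1 x)) ∧ IsLUB F g) := by
  have hsup : ∀ X : Set K, HDirected X → ∃ s, IsLUB X s := hK.1.2
  have hbdd : ∀ F : Set (ContHom K K), (∃ u, ∀ f ∈ F, f ≤ u) →
      ∃ g : ContHom K K,
        (∀ x, IsLUB ((fun f : ContHom K K => f.1 x) '' F) (g.1 x)) ∧ IsLUB F g := by
    intro F ⟨u, hu⟩
    refine exists_pointwise_lub fun x => hK.2.2 _ ⟨u.1 x, ?_⟩
    rintro p ⟨f, hf, rfl⟩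
    exact hu f hf x
  have hchar : ∀ g : ContHom K K,
      HCompact g ↔
        ∃ (k : ℕ) (a b : Fin k → K),
          (∀ i, HCompact (a i) ∧ HCompact (b i)) ∧
          ∀ x, IsLUB (Set.range fun i => stepFun bot (a i) (b i) x) (g.1 x) := by
    intro g
    constructor
    · intro hg
      obtain ⟨h, hhD, hgh⟩ :=
        hg (Dset bot g) (Dset_directed hbot hK g) g (Dset_isLUB hbot hK g) le_rfl
      have hhg : h ≤ g := Dset_le hbot hhD
      obtain ⟨k, a, b, hab, hlub⟩ := hhD
      exact ⟨k, a, b, fun i => ⟨(hab i).1, (hab i).2.1⟩,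
        fun x => isLUB_of_equiv (hlub x) (hhg x) (hgh x)⟩
    · rintro ⟨k, a, b, hab, hlub⟩
      exact compact_of_steps hbot hsup g k a b hab hlub
  refine ⟨⟨⟨⟨⟨fun _ => bot, hContinuous_const bot⟩, fun f x => hbot (f.1 x)⟩, ?_⟩, ?_, ?_⟩,
    hchar, hbdd⟩
  · -- directed sups
    intro F hF
    obtain ⟨g, -, hg⟩ := exists_pointwise_lub fun x => hsup _ (hdirected_eval hF x)
    exact ⟨g, hg⟩
  · -- algebraic
    intro g
    have hbot' : HCompact (⟨fun _ => bot, hContinuous_const bot⟩ : ContHom K K) := by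
      intro F hF s hs hle
      obtain ⟨f, hf⟩ := hF.1
      exact ⟨f, hf, fun x => hbot (f.1 x)⟩
    constructor
    · constructor
      · exact ⟨⟨fun _ => bot, hContinuous_const bot⟩, fun x => hbot (g.1 x), hbot'⟩
      · rintro h₁ ⟨h₁g, h₁c⟩ h₂ ⟨h₂g, h₂c⟩
        obtain ⟨d₁, hd₁D, hd₁⟩ :=
          h₁c (Dset bot g) (Dset_directed hbot hK g) g (Dset_isLUB hbot hK g) h₁g
        obtain ⟨d₂, hd₂D, hd₂⟩ :=
          h₂c (Dset bot g) (Dset_directed hbot hK g) g (Dset_isLUB hbot hK g) h₂g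
        obtain ⟨d, hdD, hdd₁, hdd₂⟩ := (Dset_directed hbot hK g).2 d₁ hd₁D d₂ hd₂D
        exact ⟨d, ⟨Dset_le hbot hdD, Dset_compact hbot hsup hdD⟩,
          hd₁.trans hdd₁, hd₂.trans hdd₂⟩
    · constructor
      · rintro h ⟨hg, -⟩; exact hg
      · intro v hv
        refine (Dset_isLUB hbot hK g).2 ?_
        intro h hh
        exact hv ⟨Dset_le hbot hh, Dset_compact hbot hsup hh⟩
  · -- bounded complete
    intro F hF
    obtain ⟨g, -, hg⟩ := hbdd F hF
    exact ⟨g, hg⟩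

end HSDAux

theorem tower_scott_aux (K₀ : Type u) (i₀ : Preorder K₀) (b₀ : K₀) (hb₀ : ∀ x, b₀ ≤ x)
    (h₀ : HScottDomain K₀) :
    ∀ n : ℕ, HScottDomain (Tower K₀ i₀ n).1 ∧ ∀ x, towerBot K₀ i₀ b₀ n ≤ x := by
  intro n
  induction n with
  | zero => exact ⟨h₀, hb₀⟩
  | succ m ih =>
    obtain ⟨hsd, hbot⟩ := ih
    refine ⟨(HSDAux.master hbot hsd).1, ?_⟩
    intro f x
    exact hbot (f.1 x)

/-- If `K₀` is a Homotopy Scott Domain then `K_{n+1} = [K_n → K_n]` is a Homotopy Scott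
Domain for each `n ≥ 0`: moreover the compact elements of `K_{n+1}` are the finite suprema
`⋁_{i=1}^k (a_i ⇒ b_i)` of step functors with `a_i, b_i` compact in `K_n` (suprema taken
pointwise), and every h.p.o. of continuous functors with an upper bound has a pointwise
supremum. -/
theorem scottDomain_tower (K₀ : Type u) (i₀ : Preorder K₀) (b₀ : K₀) (hb₀ : ∀ x, b₀ ≤ x)
    (h₀ : HScottDomain K₀) :
    ∀ n : ℕ,
      HScottDomain (Tower K₀ i₀ (n + 1)).1 ∧
      (∀ g : (Tower K₀ i₀ (n + 1)).1,
        HCompact g ↔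
          ∃ (k : ℕ) (a b : Fin k → (Tower K₀ i₀ n).1),
            (∀ i, HCompact (a i) ∧ HCompact (b i)) ∧
            ∀ x : (Tower K₀ i₀ n).1,
              IsLUB (Set.range fun i => stepFun (towerBot K₀ i₀ b₀ n) (a i) (b i) x)
                (Subtype.val g x)) ∧
      (∀ F : Set (Tower K₀ i₀ (n + 1)).1, (∃ u, ∀ f ∈ F, f ≤ u) →
        ∃ g : (Tower K₀ i₀ (n + 1)).1,
          (∀ x : (Tower K₀ i₀ n).1,
            IsLUB ((fun f : (Tower K₀ i₀ (n + 1)).1 => Subtype.val f x) '' F)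
              (Subtype.val g x)) ∧
          IsLUB F g) := by
  intro n
  obtain ⟨hsd, hbot⟩ := tower_scott_aux K₀ i₀ b₀ hb₀ h₀ n
  exact HSDAux.master hbot hsd
end
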